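/- (Smoothing property of damped Jacobi for the BTTB fractional matrix.) Let α, β ∈ (1,2), d, e, ρ > 0, and let A_N = T_N^{(2)}(𝓕_{(α,β)}) be the N×N 2-level Toeplitz matrix generated by 𝓕_{(α,β)}(θ₁,θ₂) = d·q_α(θ₁) + e·ρ·q_β(θ₂), with N = n₁n₂. Let a₀ = (1/4π²)∫_{[-π,π]²}𝓕_{(α,β)} be the zero-order Fourier coefficient (equal to every diagonal entry of A_N, namely a₀ = −2(d·w₁^{(α)} + ρe·w₁^{(β)}) > 0), let D_N = a₀·I_N, and let S_N = I_N − ω·D_N^{-1}A_N. If 0 < ω < 2a₀/‖𝓕_{(α,β)}‖_∞, then there exists δ > 0, independent of N, such that for all x ∈ ℂ^N, ‖S_N x‖²_{A_N} ≤ ‖x‖²_{A_N} − δ‖x‖²_{A_N D_N^{-1} A_N}. -/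

import Mathlib

open scoped Real Topology Kronecker ComplexOrder
open Matrix MeasureTheory

/-- Alternating fractional binomial coefficients. -/
noncomputable def gcoef (γ : ℝ) (k : ℕ) : ℝ :=
  (-1 : ℝ) ^ k / (Nat.factorial k) * ∏ i ∈ Finset.range k, (γ - i)

/-- WSGD weights. -/
noncomputable def w (γ : ℝ) : ℕ → ℝ
  | 0 => γ / 2 * gcoef γ 0
  | (k + 1) => γ / 2 * gcoef γ (k + 1) + (2 - γ) / 2 * gcoef γ k

/-- The symbol `f_γ(ξ) = -∑_{k=-1}^∞ w_{k+1}^{(γ)} e^{ikξ}`. -/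
noncomputable def fsym (γ : ℝ) (ξ : ℝ) : ℂ :=
  -∑' k : ℕ, (w γ k : ℂ) * Complex.exp (Complex.I * ((k : ℂ) - 1) * (ξ : ℂ))

/-- `𝓕_{(α,β)}(θ₁,θ₂) = d·q_α(θ₁) + e·ρ·q_β(θ₂)` where `q_γ(ξ) = f_γ(ξ) + f_γ(-ξ)`. -/
noncomputable def FC (α β d e ρ : ℝ) (θ₁ θ₂ : ℝ) : ℂ :=
  (d : ℂ) * (fsym α θ₁ + fsym α (-θ₁)) + ((e * ρ : ℝ) : ℂ) * (fsym β θ₂ + fsym β (-θ₂))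

/-- The 2-level Toeplitz (BTTB) matrix `T_N^{(2)}(F)` of partial orders `(n₁,n₂)`:
the entry in row `(i₁,i₂)`, column `(j₁,j₂)` is the Fourier coefficient of `F` of
index `(i₁−j₁, i₂−j₂)` (the second component of the Lean index runs along `θ₁`). -/
noncomputable def T2 (n₁ n₂ : ℕ) (F : ℝ → ℝ → ℂ) :
    Matrix (Fin n₂ × Fin n₁) (Fin n₂ × Fin n₁) ℂ :=
  Matrix.of fun i j =>
    (1 / (4 * (Real.pi : ℂ) ^ 2)) *
      ∫ θ₁ in (-Real.pi)..Real.pi, ∫ θ₂ in (-Real.pi)..Real.pi,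
        F θ₁ θ₂ * Complex.exp (-Complex.I *
          (((((i.2 : ℕ) : ℤ) - ((j.2 : ℕ) : ℤ) : ℤ) : ℂ) * (θ₁ : ℂ)
            + ((((i.1 : ℕ) : ℤ) - ((j.1 : ℕ) : ℤ) : ℤ) : ℂ) * (θ₂ : ℂ)))

/-- The Fourier coefficient of `𝓕_{(α,β)}` of order zero. -/
noncomputable def a0 (α β d e ρ : ℝ) : ℝ :=
  ((1 / (4 * (Real.pi : ℂ) ^ 2)) *
      ∫ θ₁ in (-Real.pi)..Real.pi, ∫ θ₂ in (-Real.pi)..Real.pi, FC α β d e ρ θ₁ θ₂).re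

/-- `‖𝓕_{(α,β)}‖_∞`, the sup norm of the symbol over `[-π,π]²`. -/
noncomputable def Fmax (α β d e ρ : ℝ) : ℝ :=
  sSup ((fun θ : ℝ × ℝ => ‖FC α β d e ρ θ.1 θ.2‖) ''
    Set.Icc ((-Real.pi, -Real.pi) : ℝ × ℝ) ((Real.pi, Real.pi) : ℝ × ℝ))

/-- The squared energy (semi)norm `‖x‖²_A = re(x* A x)`. -/
noncomputable def quad {n : Type*} [Fintype n] (A : Matrix n n ℂ) (x : n → ℂ) : ℝ :=
  (dotProduct (star x) (A.mulVec x)).re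

/-!
For a continuous symbol `F`, expanding the entries of `A = T2 n₁ n₂ F` as Fourier coefficients gives
`x* A x = (1/4π²) ∬ F |P_x|²` with `P_x(θ₁, θ₂) = ∑ⱼ xⱼ e^{i(j₂θ₁ + j₁θ₂)}`; for `F = 1` this is
Parseval's identity `‖x‖² = (1/4π²) ∬ |P_x|²`. Hence `A` is Hermitian when `F` is real, and
`y* A y ≤ ‖F‖_∞ ‖y‖²` uniformly in `N`.

With `y = A x` and `c = ω/a₀`, `‖(I - cA)x‖²_A = ‖x‖²_A - 2c‖y‖² + c² y* A y
≤ ‖x‖²_A - (2c - c²‖F‖_∞)‖y‖²`, and `(2c - c²‖F‖_∞)‖y‖² = δ ‖x‖²_{A D⁻¹ A}` for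
`δ = ω(2 - ω‖F‖_∞/a₀)`, which is positive exactly when `ω < 2a₀/‖F‖_∞`.

Since `|g_k^{(γ)}| = O(k⁻²)` for `1 ≤ γ ≤ 2`, the series defining `f_γ` converges absolutely and may
be integrated term by term; only the term `k = 1` has frequency zero, which gives
`a₀ = -2(d w₁^{(α)} + ρ e w₁^{(β)})`, positive because `w₁^{(γ)} = (2 - γ - γ²)/2 < 0` for `γ > 1`.
-/

lemma gcoef_zero (γ : ℝ) : gcoef γ 0 = 1 := by simp [gcoef]

lemma gcoef_one (γ : ℝ) : gcoef γ 1 = -γ := by simp [gcoef]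

lemma gcoef_succ (γ : ℝ) (k : ℕ) : gcoef γ (k + 1) = gcoef γ k * ((k - γ) / (k + 1)) := by
  simp only [gcoef, Finset.prod_range_succ, pow_succ, Nat.factorial_succ]
  push_cast
  field_simp
  ring

lemma abs_gcoef_add_two_le {γ : ℝ} (hγ : γ ∈ Set.Icc (1 : ℝ) 2) (k : ℕ) :
    |gcoef γ (k + 2)| ≤ 2 / ((k + 2) * (k + 1)) := by
  obtain ⟨h1, h2⟩ := hγ
  induction k with
  | zero =>
    rw [gcoef_succ, gcoef_one, abs_mul, abs_neg, abs_div, abs_of_nonneg (by linarith : 0 ≤ γ),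
      abs_of_nonpos (by push_cast; linarith)]
    push_cast
    rw [abs_of_pos (by norm_num)]
    nlinarith
  | succ k ih =>
    have hk : |((k + 2 : ℕ) : ℝ) - γ| ≤ k + 1 := by
      rw [abs_of_nonneg (by push_cast; linarith)]; push_cast; linarith
    calc |gcoef γ (k + 1 + 2)|
        = |gcoef γ (k + 2)| * (|((k + 2 : ℕ) : ℝ) - γ| / ((k + 2 : ℕ) + 1)) := by
          rw [gcoef_succ, abs_mul, abs_div, abs_of_pos (by positivity : (0 : ℝ) < (k + 2 : ℕ) + 1)]
      _ ≤ 2 / ((k + 2) * (k + 1)) * ((k + 1) / ((k + 2 : ℕ) + 1)) := by gcongr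
      _ = 2 / ((↑(k + 1) + 2) * (↑(k + 1) + 1)) := by push_cast; field_simp; ring

lemma summable_abs_gcoef {γ : ℝ} (hγ : γ ∈ Set.Icc (1 : ℝ) 2) :
    Summable fun k => |gcoef γ k| := by
  have hdom : Summable fun k : ℕ => 2 / ((k : ℝ) + 1) ^ 2 := by
    have h := ((summable_nat_add_iff 1).2 (Real.summable_one_div_nat_pow.2 one_lt_two)).mul_left 2
    refine h.congr fun k => ?_
    push_cast
    ring
  refine (summable_nat_add_iff 2).1 (hdom.of_nonneg_of_le (fun _ => abs_nonneg _) fun k => ?_)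
  refine (abs_gcoef_add_two_le hγ k).trans ?_
  gcongr
  nlinarith

lemma abs_w_le {γ : ℝ} (hγ : γ ∈ Set.Icc (0 : ℝ) 2) (k : ℕ) :
    |w γ k| ≤ |gcoef γ k| + |gcoef γ (k - 1)| := by
  obtain ⟨h0, h2⟩ := hγ
  cases k with
  | zero =>
    simp only [w, gcoef_zero, mul_one, Nat.zero_sub, abs_one]
    rw [abs_of_nonneg (by linarith)]
    linarith
  | succ k =>
    calc |w γ (k + 1)|
        ≤ γ / 2 * |gcoef γ (k + 1)| + (2 - γ) / 2 * |gcoef γ k| := by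
          refine (abs_add_le _ _).trans_eq ?_
          rw [abs_mul, abs_mul, abs_of_nonneg (by linarith : 0 ≤ γ / 2),
            abs_of_nonneg (by linarith : 0 ≤ (2 - γ) / 2)]
      _ ≤ |gcoef γ (k + 1)| + |gcoef γ (k + 1 - 1)| := by
          rw [Nat.add_sub_cancel]
          nlinarith [abs_nonneg (gcoef γ (k + 1)), abs_nonneg (gcoef γ k)]

lemma summable_abs_w {γ : ℝ} (hγ : γ ∈ Set.Icc (1 : ℝ) 2) : Summable fun k => |w γ k| := by
  have hg := summable_abs_gcoef hγ
  have hg' : Summable fun k => |gcoef γ (k - 1)| := (summable_nat_add_iff 1).1 (by simpa using hg)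
  exact (hg.add hg').of_nonneg_of_le (fun _ => abs_nonneg _)
    (abs_w_le ⟨by linarith [hγ.1], hγ.2⟩)

lemma w_one (γ : ℝ) : w γ 1 = (2 - γ - γ ^ 2) / 2 := by
  simp only [w, gcoef_zero, gcoef_one, zero_add]
  ring

lemma w_one_neg {γ : ℝ} (hγ : 1 < γ) : w γ 1 < 0 := by
  rw [w_one]; nlinarith

lemma integral_cexp_int_mul_I (m : ℤ) :
    ∫ θ in (-π)..π, Complex.exp (Complex.I * m * θ) = if m = 0 then 2 * (π : ℂ) else 0 := by
  split_ifs with hm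
  · simp only [hm, Int.cast_zero, mul_zero, zero_mul, Complex.exp_zero,
      intervalIntegral.integral_const, sub_neg_eq_add, Complex.real_smul, Complex.ofReal_add,
      mul_one]
    ring
  · have hc : Complex.I * m ≠ 0 := mul_ne_zero Complex.I_ne_zero (Int.cast_ne_zero.2 hm)
    rw [integral_exp_mul_complex hc, div_eq_zero_iff, sub_eq_zero]
    left
    have hperiod : Complex.I * m * π = Complex.I * m * (-π : ℝ) + m * (2 * π * Complex.I) := by
      push_cast; ring
    rw [hperiod, Complex.exp_add, Complex.exp_int_mul_two_pi_mul_I, mul_one]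

section Symbol

variable {γ : ℝ}

lemma norm_w_mul_cexp (k : ℕ) (ξ : ℝ) :
    ‖(w γ k : ℂ) * Complex.exp (Complex.I * ((k : ℂ) - 1) * ξ)‖ = |w γ k| := by
  have harg : Complex.I * ((k : ℂ) - 1) * ξ = (((k : ℝ) - 1) * ξ : ℝ) * Complex.I := by
    push_cast; ring
  rw [norm_mul, harg, Complex.norm_exp_ofReal_mul_I, mul_one, Complex.norm_real, Real.norm_eq_abs]

lemma conj_fsym (ξ : ℝ) : (starRingEnd ℂ) (fsym γ ξ) = fsym γ (-ξ) := by
  simp only [fsym, map_neg, Complex.conj_tsum, map_mul, ← Complex.exp_conj, map_sub,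
    Complex.conj_ofReal, Complex.conj_I, Complex.conj_natCast, map_one]
  congr 3 with k
  simp only [neg_mul, Complex.ofReal_neg, mul_neg]

variable (hγ : γ ∈ Set.Icc (1 : ℝ) 2)
include hγ

lemma summable_w_mul_cexp (ξ : ℝ) :
    Summable fun k : ℕ => (w γ k : ℂ) * Complex.exp (Complex.I * ((k : ℂ) - 1) * ξ) :=
  .of_norm (by simpa only [norm_w_mul_cexp] using summable_abs_w hγ)

lemma continuous_fsym : Continuous (fsym γ) :=
  (continuous_tsum (fun k => by fun_prop) (summable_abs_w hγ)
    fun k ξ => (norm_w_mul_cexp k ξ).le).neg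

lemma integral_fsym : ∫ ξ in (-π)..π, fsym γ ξ = -(2 * π * (w γ 1 : ℂ)) := by
  have hsum : HasSum
      (fun k : ℕ => ∫ ξ in (-π)..π, (w γ k : ℂ) * Complex.exp (Complex.I * ((k : ℂ) - 1) * ξ))
      (∫ ξ in (-π)..π, ∑' k : ℕ, (w γ k : ℂ) * Complex.exp (Complex.I * ((k : ℂ) - 1) * ξ)) :=
    intervalIntegral.hasSum_integral_of_dominated_convergence (fun k _ => |w γ k|)
      (fun k => by fun_prop) (fun k => ae_of_all _ fun ξ _ => (norm_w_mul_cexp k ξ).le)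
      (ae_of_all _ fun _ _ => summable_abs_w hγ) intervalIntegrable_const
      (ae_of_all _ fun ξ _ => (summable_w_mul_cexp hγ ξ).hasSum)
  have hterm (k : ℕ) : ∫ ξ in (-π)..π, (w γ k : ℂ) * Complex.exp (Complex.I * ((k : ℂ) - 1) * ξ)
      = if k = 1 then 2 * π * (w γ 1 : ℂ) else 0 := by
    have hk := integral_cexp_int_mul_I ((k : ℤ) - 1)
    push_cast at hk
    rw [intervalIntegral.integral_const_mul, hk]
    by_cases h1 : k = 1
    · subst h1
      simp only [Nat.cast_one, sub_self, if_true]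
      ring
    · rw [if_neg (by omega), if_neg h1, mul_zero]
  simp only [hterm] at hsum
  unfold fsym
  rw [intervalIntegral.integral_neg, hsum.unique (hasSum_ite_eq 1 _)]

lemma integral_fsym_add_fsym_neg :
    ∫ ξ in (-π)..π, (fsym γ ξ + fsym γ (-ξ)) = -(4 * π * (w γ 1 : ℂ)) := by
  have hcont := continuous_fsym hγ
  have hneg : ∫ ξ in (-π)..π, fsym γ (-ξ) = ∫ ξ in (-π)..π, fsym γ ξ := by
    rw [intervalIntegral.integral_comp_neg, neg_neg]
  rw [intervalIntegral.integral_add (f := fsym γ) (g := fun ξ => fsym γ (-ξ))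
    (hcont.intervalIntegrable _ _)
    ((hcont.comp continuous_neg).intervalIntegrable _ _), hneg, integral_fsym hγ]
  ring

end Symbol

section SquareIntegral

variable {E : Type*} [NormedAddCommGroup E] [NormedSpace ℝ E]

noncomputable def squareIntegral (G : ℝ → ℝ → E) : E :=
  ∫ θ₁ in (-π)..π, ∫ θ₂ in (-π)..π, G θ₁ θ₂

lemma squareIntegral_finsetSum {ι : Type*} (s : Finset ι) {G : ι → ℝ → ℝ → E}
    (hG : ∀ i ∈ s, Continuous (Function.uncurry (G i))) :
    squareIntegral (fun θ₁ θ₂ => ∑ i ∈ s, G i θ₁ θ₂) = ∑ i ∈ s, squareIntegral (G i) := by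
  have hinner (θ₁ : ℝ) :
      ∫ θ₂ in (-π)..π, ∑ i ∈ s, G i θ₁ θ₂ = ∑ i ∈ s, ∫ θ₂ in (-π)..π, G i θ₁ θ₂ :=
    intervalIntegral.integral_finsetSum fun i hi =>
      ((hG i hi).comp (Continuous.prodMk_right θ₁)).intervalIntegrable _ _
  simp only [squareIntegral, hinner]
  exact intervalIntegral.integral_finsetSum fun i hi =>
    (intervalIntegral.continuous_parametric_intervalIntegral_of_continuous' (hG i hi) _ _
      ).intervalIntegrable _ _

lemma squareIntegral_add_separable [CompleteSpace E] {f g : ℝ → E}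
    (hf : IntervalIntegrable f volume (-π) π) (hg : IntervalIntegrable g volume (-π) π) :
    squareIntegral (fun θ₁ θ₂ => f θ₁ + g θ₂)
      = (2 * π) • ((∫ θ in (-π)..π, f θ) + ∫ θ in (-π)..π, g θ) := by
  have hperiod : π - -π = 2 * π := by ring
  have hinner (θ₁ : ℝ) :
      ∫ θ₂ in (-π)..π, (f θ₁ + g θ₂) = (2 * π) • f θ₁ + ∫ θ in (-π)..π, g θ := by
    rw [intervalIntegral.integral_add intervalIntegrable_const hg, intervalIntegral.integral_const,
      hperiod]
  simp only [squareIntegral, hinner]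
  rw [intervalIntegral.integral_add (f := fun θ => (2 * π) • f θ) (hf.smul _)
    intervalIntegrable_const, intervalIntegral.integral_smul, intervalIntegral.integral_const,
    hperiod, smul_add]

variable {𝕜 : Type*} [RCLike 𝕜]

lemma squareIntegral_const_mul (c : 𝕜) (G : ℝ → ℝ → 𝕜) :
    squareIntegral (fun θ₁ θ₂ => c * G θ₁ θ₂) = c * squareIntegral G := by
  simp only [squareIntegral, intervalIntegral.integral_const_mul]

lemma squareIntegral_mul_separable (f g : ℝ → 𝕜) :
    squareIntegral (fun θ₁ θ₂ => f θ₁ * g θ₂)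
      = (∫ θ in (-π)..π, f θ) * ∫ θ in (-π)..π, g θ := by
  simp only [squareIntegral, intervalIntegral.integral_const_mul,
    intervalIntegral.integral_mul_const]

lemma conj_squareIntegral (G : ℝ → ℝ → 𝕜) :
    (starRingEnd 𝕜) (squareIntegral G) = squareIntegral fun θ₁ θ₂ => (starRingEnd 𝕜) (G θ₁ θ₂) := by
  simp only [squareIntegral, intervalIntegral.intervalIntegral_conj]

lemma re_squareIntegral {G : ℝ → ℝ → 𝕜} (hG : Continuous (Function.uncurry G)) :
    RCLike.re (squareIntegral G) = squareIntegral fun θ₁ θ₂ => RCLike.re (G θ₁ θ₂) := by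
  have hinner (θ₁ : ℝ) : RCLike.re (∫ θ₂ in (-π)..π, G θ₁ θ₂)
      = ∫ θ₂ in (-π)..π, RCLike.re (G θ₁ θ₂) :=
    (intervalIntegral.intervalIntegral_re
      ((hG.comp (Continuous.prodMk_right θ₁)).intervalIntegrable _ _)).symm
  rw [squareIntegral, ← intervalIntegral.intervalIntegral_re
    ((intervalIntegral.continuous_parametric_intervalIntegral_of_continuous' hG _ _
      ).intervalIntegrable _ _)]
  simp only [hinner, squareIntegral]

lemma squareIntegral_mono {G H : ℝ → ℝ → ℝ} (hG : Continuous (Function.uncurry G))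
    (hH : Continuous (Function.uncurry H))
    (hle : ∀ θ₁ ∈ Set.Icc (-π) π, ∀ θ₂ ∈ Set.Icc (-π) π, G θ₁ θ₂ ≤ H θ₁ θ₂) :
    squareIntegral G ≤ squareIntegral H := by
  have hπ : -π ≤ π := by linarith [Real.pi_pos]
  refine intervalIntegral.integral_mono_on hπ
    ((intervalIntegral.continuous_parametric_intervalIntegral_of_continuous' hG _ _
      ).intervalIntegrable _ _)
    ((intervalIntegral.continuous_parametric_intervalIntegral_of_continuous' hH _ _
      ).intervalIntegrable _ _) fun θ₁ hθ₁ => ?_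
  exact intervalIntegral.integral_mono_on hπ
    ((hG.comp (Continuous.prodMk_right θ₁)).intervalIntegrable _ _)
    ((hH.comp (Continuous.prodMk_right θ₁)).intervalIntegrable _ _) (hle θ₁ hθ₁)

end SquareIntegral

noncomputable def fourierMode (m l : ℤ) (θ₁ θ₂ : ℝ) : ℂ :=
  Complex.exp (-Complex.I * ((m : ℂ) * θ₁ + (l : ℂ) * θ₂))

lemma continuous_fourierMode (m l : ℤ) : Continuous (Function.uncurry (fourierMode m l)) := by
  unfold fourierMode Function.uncurry
  fun_prop

lemma conj_fourierMode (m l : ℤ) (θ₁ θ₂ : ℝ) :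
    (starRingEnd ℂ) (fourierMode m l θ₁ θ₂) = fourierMode (-m) (-l) θ₁ θ₂ := by
  simp only [fourierMode, ← Complex.exp_conj, map_mul, map_add, map_neg, Complex.conj_I,
    Complex.conj_ofReal, map_intCast, Int.cast_neg]
  ring_nf

lemma squareIntegral_fourierMode (m l : ℤ) :
    squareIntegral (fourierMode m l) = if m = 0 ∧ l = 0 then 4 * (π : ℂ) ^ 2 else 0 := by
  have hsplit : fourierMode m l = fun (θ₁ θ₂ : ℝ) =>
      Complex.exp (Complex.I * ((-m : ℤ) : ℂ) * θ₁) *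
        Complex.exp (Complex.I * ((-l : ℤ) : ℂ) * θ₂) := by
    ext θ₁ θ₂
    rw [fourierMode, ← Complex.exp_add]
    push_cast
    ring_nf
  rw [hsplit, squareIntegral_mul_separable, integral_cexp_int_mul_I, integral_cexp_int_mul_I]
  simp only [neg_eq_zero]
  by_cases hm : m = 0 <;> by_cases hl : l = 0
  · simp only [hm, hl, and_self, if_true]
    ring
  all_goals simp only [hm, hl, if_false, and_false, false_and, mul_zero, zero_mul]

section Toeplitz

variable {n₁ n₂ : ℕ}

lemma T2_apply (F : ℝ → ℝ → ℂ) (i j : Fin n₂ × Fin n₁) :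
    T2 n₁ n₂ F i j = 1 / (4 * (π : ℂ) ^ 2) * squareIntegral fun θ₁ θ₂ =>
      F θ₁ θ₂ * fourierMode ((i.2 : ℕ) - (j.2 : ℕ)) ((i.1 : ℕ) - (j.1 : ℕ)) θ₁ θ₂ :=
  rfl

lemma T2_one : T2 n₁ n₂ (fun _ _ => 1) = 1 := by
  ext i j
  simp only [T2_apply, one_mul, squareIntegral_fourierMode, sub_eq_zero, Nat.cast_inj,
    Fin.val_inj, Matrix.one_apply]
  by_cases h : i = j
  · simp only [h, and_self, if_true]
    field_simp
  · rw [if_neg fun h' => h (Prod.ext h'.2 h'.1), if_neg h, mul_zero]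

lemma T2_isHermitian {F : ℝ → ℝ → ℂ} (hF : ∀ θ₁ θ₂, (starRingEnd ℂ) (F θ₁ θ₂) = F θ₁ θ₂) :
    (T2 n₁ n₂ F).IsHermitian := by
  ext i j
  simp only [conjTranspose_apply, T2_apply, RCLike.star_def, map_mul, conj_squareIntegral, hF,
    conj_fourierMode, neg_sub, map_div₀, map_one, map_pow, Complex.conj_ofReal, map_ofNat]

noncomputable def trigPoly (y : Fin n₂ × Fin n₁ → ℂ) (θ₁ θ₂ : ℝ) : ℂ :=
  ∑ j, y j * fourierMode (-(j.2 : ℕ)) (-(j.1 : ℕ)) θ₁ θ₂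

lemma continuous_trigPoly (y : Fin n₂ × Fin n₁ → ℂ) :
    Continuous (Function.uncurry (trigPoly y)) :=
  continuous_finsetSum _ fun _ _ => continuous_const.mul (continuous_fourierMode _ _)

lemma fourierMode_mul (m l m' l' : ℤ) (θ₁ θ₂ : ℝ) :
    fourierMode m l θ₁ θ₂ * fourierMode m' l' θ₁ θ₂ = fourierMode (m + m') (l + l') θ₁ θ₂ := by
  rw [fourierMode, fourierMode, fourierMode, ← Complex.exp_add]
  push_cast
  ring_nf

lemma normSq_trigPoly (y : Fin n₂ × Fin n₁ → ℂ) (θ₁ θ₂ : ℝ) :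
    (Complex.normSq (trigPoly y θ₁ θ₂) : ℂ) = ∑ i, ∑ j, (starRingEnd ℂ) (y i) * y j *
      fourierMode ((i.2 : ℕ) - (j.2 : ℕ)) ((i.1 : ℕ) - (j.1 : ℕ)) θ₁ θ₂ := by
  rw [Complex.normSq_eq_conj_mul_self, trigPoly, map_sum, Finset.sum_mul_sum]
  refine Finset.sum_congr rfl fun i _ => Finset.sum_congr rfl fun j _ => ?_
  rw [map_mul, conj_fourierMode, neg_neg, neg_neg, sub_eq_add_neg, sub_eq_add_neg,
    ← fourierMode_mul]
  ring

lemma dotProduct_T2_mulVec {F : ℝ → ℝ → ℂ} (hF : Continuous (Function.uncurry F))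
    (y : Fin n₂ × Fin n₁ → ℂ) :
    star y ⬝ᵥ T2 n₁ n₂ F *ᵥ y = 1 / (4 * (π : ℂ) ^ 2) *
      squareIntegral fun θ₁ θ₂ => F θ₁ θ₂ * Complex.normSq (trigPoly y θ₁ θ₂) := by
  have hcont (i j : Fin n₂ × Fin n₁) : Continuous (Function.uncurry fun θ₁ θ₂ =>
      F θ₁ θ₂ * ((starRingEnd ℂ) (y i) * y j *
        fourierMode ((i.2 : ℕ) - (j.2 : ℕ)) ((i.1 : ℕ) - (j.1 : ℕ)) θ₁ θ₂)) :=
    hF.mul (continuous_const.mul (continuous_fourierMode _ _))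
  simp only [normSq_trigPoly, Finset.mul_sum]
  rw [squareIntegral_finsetSum]
  swap
  · exact fun i _ => continuous_finsetSum _ fun j _ => hcont i j
  simp only [squareIntegral_finsetSum _ fun j _ => hcont _ j, dotProduct, mulVec, Finset.mul_sum,
    Pi.star_apply, RCLike.star_def, T2_apply]
  refine Finset.sum_congr rfl fun i _ => Finset.sum_congr rfl fun j _ => ?_
  have hpull : (fun θ₁ θ₂ => F θ₁ θ₂ * ((starRingEnd ℂ) (y i) * y j *
      fourierMode ((i.2 : ℕ) - (j.2 : ℕ)) ((i.1 : ℕ) - (j.1 : ℕ)) θ₁ θ₂)) = fun θ₁ θ₂ =>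
      (starRingEnd ℂ) (y i) * y j *
        (F θ₁ θ₂ * fourierMode ((i.2 : ℕ) - (j.2 : ℕ)) ((i.1 : ℕ) - (j.1 : ℕ)) θ₁ θ₂) := by
    ext; ring
  rw [hpull, squareIntegral_const_mul]
  ring

lemma quad_T2_eq {F : ℝ → ℝ → ℂ} (hF : Continuous (Function.uncurry F))
    (y : Fin n₂ × Fin n₁ → ℂ) :
    quad (T2 n₁ n₂ F) y = 1 / (4 * π ^ 2) *
      squareIntegral fun θ₁ θ₂ => (F θ₁ θ₂).re * Complex.normSq (trigPoly y θ₁ θ₂) := by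
  have hcont : Continuous (Function.uncurry fun θ₁ θ₂ =>
      F θ₁ θ₂ * Complex.normSq (trigPoly y θ₁ θ₂)) :=
    hF.mul (Complex.continuous_ofReal.comp (Complex.continuous_normSq.comp (continuous_trigPoly y)))
  rw [quad, dotProduct_T2_mulVec hF, show 1 / (4 * (π : ℂ) ^ 2) = ((1 / (4 * π ^ 2) : ℝ) : ℂ) by
    push_cast; ring, Complex.re_ofReal_mul, ← RCLike.re_to_complex, re_squareIntegral hcont]
  simp only [RCLike.re_to_complex, Complex.re_mul_ofReal]

lemma quad_T2_le {F : ℝ → ℝ → ℂ} (hF : Continuous (Function.uncurry F)) {M : ℝ}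
    (hM : ∀ θ₁ ∈ Set.Icc (-π) π, ∀ θ₂ ∈ Set.Icc (-π) π, (F θ₁ θ₂).re ≤ M)
    (y : Fin n₂ × Fin n₁ → ℂ) :
    quad (T2 n₁ n₂ F) y ≤ M * quad 1 y := by
  have hnormSq : Continuous (Function.uncurry fun θ₁ θ₂ => Complex.normSq (trigPoly y θ₁ θ₂)) :=
    Complex.continuous_normSq.comp (continuous_trigPoly y)
  rw [← T2_one, quad_T2_eq hF, quad_T2_eq continuous_const]
  simp only [Complex.one_re, one_mul]
  rw [mul_left_comm, ← squareIntegral_const_mul M]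
  refine mul_le_mul_of_nonneg_left (squareIntegral_mono ?_ ?_ fun θ₁ hθ₁ θ₂ hθ₂ => ?_) ?_
  · exact (Complex.continuous_re.comp hF).mul hnormSq
  · exact continuous_const.mul hnormSq
  · exact mul_le_mul_of_nonneg_right (hM θ₁ hθ₁ θ₂ hθ₂) (Complex.normSq_nonneg _)
  · positivity

end Toeplitz

section Jacobi

variable {n : Type*} [Fintype n] {A : Matrix n n ℂ}

lemma Matrix.IsHermitian.star_dotProduct_mulVec (hA : A.IsHermitian) (x y : n → ℂ) :
    star x ⬝ᵥ A *ᵥ y = star (A *ᵥ x) ⬝ᵥ y := by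
  rw [Matrix.dotProduct_mulVec, star_mulVec, hA.eq]

variable [DecidableEq n]

lemma quad_one_sub_smul_mulVec (hA : A.IsHermitian) (c : ℝ) (x : n → ℂ) :
    quad A ((1 - (c : ℂ) • A) *ᵥ x)
      = quad A x - 2 * c * quad 1 (A *ᵥ x) + c ^ 2 * quad A (A *ᵥ x) := by
  have hexpand : star ((1 - (c : ℂ) • A) *ᵥ x) ⬝ᵥ A *ᵥ ((1 - (c : ℂ) • A) *ᵥ x)
      = star x ⬝ᵥ A *ᵥ x - 2 * c * (star (A *ᵥ x) ⬝ᵥ 1 *ᵥ (A *ᵥ x))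
        + (c : ℂ) ^ 2 * (star (A *ᵥ x) ⬝ᵥ A *ᵥ (A *ᵥ x)) := by
    simp only [sub_mulVec, one_mulVec, smul_mulVec, mulVec_sub, mulVec_smul, star_sub, star_smul,
      Complex.star_def, Complex.conj_ofReal, sub_dotProduct, dotProduct_sub, smul_dotProduct,
      dotProduct_smul, smul_eq_mul, hA.star_dotProduct_mulVec x]
    ring
  rw [quad, hexpand, quad, quad, quad]
  simp only [Complex.add_re, Complex.sub_re, ← Complex.ofReal_pow, Complex.re_ofReal_mul,
    ← Complex.ofReal_ofNat, ← Complex.ofReal_mul]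

lemma smul_one_inv (c : ℂ) : ((c • 1 : Matrix n n ℂ))⁻¹ = c⁻¹ • 1 := by
  rcases eq_or_ne c 0 with rfl | hc
  · simp
  · refine inv_eq_right_inv ?_
    rw [smul_mul_smul, mul_one, mul_inv_cancel₀ hc, one_smul]

lemma quad_mul_smul_one_inv_mul (hA : A.IsHermitian) (a : ℝ) (x : n → ℂ) :
    quad (A * ((a : ℂ) • 1)⁻¹ * A) x = a⁻¹ * quad 1 (A *ᵥ x) := by
  rw [smul_one_inv, Matrix.mul_smul, mul_one, smul_mul, quad, smul_mulVec, ← mulVec_mulVec,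
    dotProduct_smul, hA.star_dotProduct_mulVec, smul_eq_mul, ← Complex.ofReal_inv,
    Complex.re_ofReal_mul, quad, one_mulVec]

theorem quad_jacobi_le (hA : A.IsHermitian) {M : ℝ} (hM : ∀ y, quad A y ≤ M * quad 1 y)
    (a ω : ℝ) (x : n → ℂ) :
    quad A ((1 - ((ω / a : ℝ) : ℂ) • A) *ᵥ x)
      ≤ quad A x - ω * (2 - ω * M / a) * quad (A * ((a : ℂ) • 1)⁻¹ * A) x := by
  have hδ : ω * (2 - ω * M / a) * a⁻¹ = 2 * (ω / a) - (ω / a) ^ 2 * M := by ring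
  rw [quad_one_sub_smul_mulVec hA, quad_mul_smul_one_inv_mul hA, ← mul_assoc, hδ]
  nlinarith [mul_le_mul_of_nonneg_left (hM (A *ᵥ x)) (sq_nonneg (ω / a))]

end Jacobi

section Symbol2D

variable {α β : ℝ} (d e ρ : ℝ)

lemma conj_FC (θ₁ θ₂ : ℝ) : (starRingEnd ℂ) (FC α β d e ρ θ₁ θ₂) = FC α β d e ρ θ₁ θ₂ := by
  simp only [FC, map_add, map_mul, Complex.conj_ofReal, conj_fsym, neg_neg]
  ring

variable {d e ρ} (hα : α ∈ Set.Icc (1 : ℝ) 2) (hβ : β ∈ Set.Icc (1 : ℝ) 2)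
include hα hβ

lemma continuous_FC : Continuous (Function.uncurry (FC α β d e ρ)) := by
  have := continuous_fsym hα
  have := continuous_fsym hβ
  unfold FC Function.uncurry
  fun_prop

lemma re_FC_le_Fmax {θ₁ θ₂ : ℝ} (h₁ : θ₁ ∈ Set.Icc (-π) π) (h₂ : θ₂ ∈ Set.Icc (-π) π) :
    (FC α β d e ρ θ₁ θ₂).re ≤ Fmax α β d e ρ :=
  (Complex.re_le_norm _).trans <| le_csSup
    (isCompact_Icc.bddAbove_image (continuous_FC hα hβ).norm.continuousOn)
    ⟨(θ₁, θ₂), ⟨⟨h₁.1, h₂.1⟩, ⟨h₁.2, h₂.2⟩⟩, rfl⟩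

lemma a0_eq : a0 α β d e ρ = -2 * (d * w α 1 + ρ * e * w β 1) := by
  have hq (γ : ℝ) (hγ : γ ∈ Set.Icc (1 : ℝ) 2) (c : ℝ) :
      IntervalIntegrable (fun θ => (c : ℂ) * (fsym γ θ + fsym γ (-θ))) volume (-π) π := by
    have := continuous_fsym hγ
    exact Continuous.intervalIntegrable (by fun_prop) _ _
  have hsum : squareIntegral (FC α β d e ρ) = _ :=
    squareIntegral_add_separable (hq α hα d) (hq β hβ (e * ρ))
  rw [intervalIntegral.integral_const_mul, intervalIntegral.integral_const_mul,
    integral_fsym_add_fsym_neg hα, integral_fsym_add_fsym_neg hβ] at hsum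
  have hval : 1 / (4 * (π : ℂ) ^ 2) * squareIntegral (FC α β d e ρ)
      = ((-2 * (d * w α 1 + ρ * e * w β 1) : ℝ) : ℂ) := by
    rw [hsum, Complex.real_smul]
    push_cast
    field_simp
    ring
  rw [← Complex.ofReal_re (-2 * _), ← hval]
  rfl

end Symbol2D

lemma a0_pos {α β d e ρ : ℝ} (hα : α ∈ Set.Ioo (1 : ℝ) 2) (hβ : β ∈ Set.Ioo (1 : ℝ) 2)
    (hd : 0 < d) (he : 0 < e) (hρ : 0 < ρ) : 0 < a0 α β d e ρ := by
  rw [a0_eq (Set.Ioo_subset_Icc_self hα) (Set.Ioo_subset_Icc_self hβ)]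
  nlinarith [mul_neg_of_pos_of_neg hd (w_one_neg hα.1),
    mul_neg_of_pos_of_neg (mul_pos hρ he) (w_one_neg hβ.1)]

/-- Smoothing property of damped Jacobi for `A_N = T_N^{(2)}(𝓕_{(α,β)})`: the zero-order
Fourier coefficient `a₀` equals the diagonal entries, `a₀ = −2(d·w₁^{(α)} + ρe·w₁^{(β)}) > 0`,
and if `0 < ω < 2a₀/‖𝓕_{(α,β)}‖_∞` there is `δ > 0` independent of `N` such that
`‖S_N x‖²_{A_N} ≤ ‖x‖²_{A_N} − δ‖x‖²_{A_N D_N⁻¹ A_N}` for all `x`, where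
`S_N = I − ω D_N⁻¹ A_N` and `D_N = a₀ I_N`. -/
theorem jacobi_smoothing_property (α β d e ρ ω : ℝ)
    (hα : α ∈ Set.Ioo (1 : ℝ) 2) (hβ : β ∈ Set.Ioo (1 : ℝ) 2)
    (hd : 0 < d) (he : 0 < e) (hρ : 0 < ρ)
    (hω1 : 0 < ω) (hω2 : ω < 2 * a0 α β d e ρ / Fmax α β d e ρ) :
    0 < a0 α β d e ρ ∧
    a0 α β d e ρ = -2 * (d * w α 1 + ρ * e * w β 1) ∧
    ∃ δ : ℝ, 0 < δ ∧ ∀ n₁ n₂ : ℕ, 1 ≤ n₁ → 1 ≤ n₂ →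
      ∀ x : Fin n₂ × Fin n₁ → ℂ,
        quad (T2 n₁ n₂ (FC α β d e ρ))
            (((1 : Matrix (Fin n₂ × Fin n₁) (Fin n₂ × Fin n₁) ℂ) -
              ((ω / a0 α β d e ρ : ℝ) : ℂ) • T2 n₁ n₂ (FC α β d e ρ)).mulVec x) ≤
          quad (T2 n₁ n₂ (FC α β d e ρ)) x -
            δ * quad (T2 n₁ n₂ (FC α β d e ρ) *
                (((a0 α β d e ρ : ℝ) : ℂ) •
                  (1 : Matrix (Fin n₂ × Fin n₁) (Fin n₂ × Fin n₁) ℂ))⁻¹ *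
                T2 n₁ n₂ (FC α β d e ρ)) x := by
  have hα' := Set.Ioo_subset_Icc_self hα
  have hβ' := Set.Ioo_subset_Icc_self hβ
  have ha0 := a0_pos hα hβ hd he hρ
  have hFmax : 0 < Fmax α β d e ρ := by
    by_contra! h
    linarith [div_nonpos_of_nonneg_of_nonpos (by positivity : 0 ≤ 2 * a0 α β d e ρ) h]
  have hδ : ω * Fmax α β d e ρ / a0 α β d e ρ < 2 :=
    (div_lt_iff₀ ha0).2 ((lt_div_iff₀ hFmax).1 hω2)
  refine ⟨ha0, a0_eq hα' hβ', ω * (2 - ω * Fmax α β d e ρ / a0 α β d e ρ),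
    mul_pos hω1 (by linarith), fun n₁ n₂ _ _ x => ?_⟩
  exact quad_jacobi_le (T2_isHermitian (conj_FC d e ρ))
    (quad_T2_le (continuous_FC hα' hβ') fun θ₁ h₁ θ₂ h₂ => re_FC_le_Fmax hα' hβ' h₁ h₂) _ ω x
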